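/- Let σ > 0, r > 0, λ > 0, 0 < δ < 1, and θ as above. Then δθ(r) + (1-δ)θ(r+λ) ≥ θ(r) and δ(θ(r)-1)/r + (1-δ)(θ(r+λ)-1)/(r+λ) ≤ (θ(r)-1)/r, so that (δθ(r)+(1-δ)θ(r+λ)) / (δ(θ(r)-1)/r + (1-δ)(θ(r+λ)-1)/(r+λ)) ≥ θ(r)/((θ(r)-1)/r) = r·θ(r)/(θ(r)-1). -/
import Mathlib


open Real Set

set_option maxHeartbeats 1000000

/-- The positive root `θ(r)` of `(1/2)σ²θ² - (1/2)σ²θ - r = 0`. -/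
noncomputable def θfun (σ r : ℝ) : ℝ :=
  (σ^2 / 2 + Real.sqrt (σ^4 / 4 + 2 * σ^2 * r)) / σ^2

theorem stmt16 (σ r lam δ : ℝ) (hσ : 0 < σ) (hr : 0 < r) (hlam : 0 < lam)
    (hδ0 : 0 < δ) (hδ1 : δ < 1) :
    δ * θfun σ r + (1 - δ) * θfun σ (r + lam) ≥ θfun σ r ∧
    δ * (θfun σ r - 1) / r + (1 - δ) * (θfun σ (r + lam) - 1) / (r + lam) ≤
      (θfun σ r - 1) / r ∧
    (δ * θfun σ r + (1 - δ) * θfun σ (r + lam)) /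
        (δ * (θfun σ r - 1) / r + (1 - δ) * (θfun σ (r + lam) - 1) / (r + lam)) ≥
      r * θfun σ r / (θfun σ r - 1) := by
  have hσ2 : (0:ℝ) < σ^2 := by positivity
  have hA2 : (Real.sqrt (σ^4 / 4 + 2 * σ^2 * r))^2 = σ^4 / 4 + 2 * σ^2 * r :=
    Real.sq_sqrt (by positivity)
  have hB2 : (Real.sqrt (σ^4 / 4 + 2 * σ^2 * (r + lam)))^2 = σ^4 / 4 + 2 * σ^2 * (r + lam) :=
    Real.sq_sqrt (by positivity)
  have hA0 : 0 ≤ Real.sqrt (σ^4 / 4 + 2 * σ^2 * r) := Real.sqrt_nonneg _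
  have hB0 : 0 ≤ Real.sqrt (σ^4 / 4 + 2 * σ^2 * (r + lam)) := Real.sqrt_nonneg _
  set A := Real.sqrt (σ^4 / 4 + 2 * σ^2 * r) with hAdef
  set B := Real.sqrt (σ^4 / 4 + 2 * σ^2 * (r + lam)) with hBdef
  have hAgt : σ^2/2 < A := by nlinarith
  have hBgt : σ^2/2 < B := by nlinarith
  have hAB : A < B := by nlinarith
  set a := θfun σ r with hadef
  set b := θfun σ (r + lam) with hbdef
  have ha : a = (σ^2/2 + A) / σ^2 := rfl
  have hb : b = (σ^2/2 + B) / σ^2 := rfl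
  have ha1 : 1 < a := by rw [ha, lt_div_iff₀ hσ2]; nlinarith
  have hb1 : 1 < b := by rw [hb, lt_div_iff₀ hσ2]; nlinarith
  have hab : a ≤ b := by rw [ha, hb, div_le_div_iff₀ hσ2 hσ2]; nlinarith
  -- key identities
  have hApos : 0 < A + σ^2/2 := by nlinarith
  have hBpos : 0 < B + σ^2/2 := by nlinarith
  have hkeya : (a - 1) / r = 2 / (A + σ^2/2) := by
    rw [ha, div_eq_div_iff hr.ne' hApos.ne']
    field_simp
    linear_combination 4*hA2
  have hkeyb : (b - 1) / (r + lam) = 2 / (B + σ^2/2) := by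
    rw [hb, div_eq_div_iff (by linarith : (0:ℝ) < r + lam).ne' hBpos.ne']
    field_simp
    linear_combination 4*hB2
  have hba : (b - 1) / (r + lam) ≤ (a - 1) / r := by
    rw [hkeya, hkeyb]
    apply div_le_div_of_nonneg_left (by norm_num : (0:ℝ) ≤ 2) hApos (by linarith)
  -- part 1
  have h1 : δ * a + (1 - δ) * b ≥ a := by nlinarith [mul_nonneg (by linarith : (0:ℝ) ≤ 1 - δ) (by linarith : (0:ℝ) ≤ b - a)]
  -- part 2
  have h2 : δ * (a - 1) / r + (1 - δ) * (b - 1) / (r + lam) ≤ (a - 1) / r := by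
    rw [mul_div_assoc, mul_div_assoc]
    nlinarith [mul_nonneg (by linarith : (0:ℝ) ≤ 1 - δ) (by linarith [hba] : (0:ℝ) ≤ (a-1)/r - (b-1)/(r+lam))]
  refine ⟨h1, h2, ?_⟩
  -- part 3
  have hDpos : 0 < δ * (a - 1) / r + (1 - δ) * (b - 1) / (r + lam) :=
    add_pos (div_pos (mul_pos hδ0 (by linarith)) hr)
      (div_pos (mul_pos (by linarith) (by linarith)) (by linarith))
  have heq : r * a / (a - 1) = a / ((a - 1) / r) := by
    rw [div_div_eq_mul_div]; ring
  rw [ge_iff_le, heq]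
  exact div_le_div₀ (by nlinarith) h1 hDpos h2
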